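/- Let (Ω, ℱ, P) be a probability space, t and d integers with t ≥ d + 1 and d ≥ 1, and X : Ω → ℝ a random variable with 0 ≤ X ≤ 1 almost surely. Assume that for every ε ∈ (0,1), P(X > ε) ≥ Σ_{i=0}^{d-1} C(t−1,i) ε^i (1−ε)^{t−1−i}. Then E[X] ≥ d/t. -/

import Mathlib

open MeasureTheory Set
open scoped Nat

/-!
By the layer-cake formula, `E[X] = ∫₀¹ P(X ≥ ε) dε ≥ ∫₀¹ P(X > ε) dε`, which by hypothesis dominates
the integral over `[0,1]` of the binomial lower tail. Each of its `d` terms integrates to `1/t` by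
the Beta integral `∫₀¹ xⁱ (1 - x)ʲ dx = i! j! / (i + j + 1)!`.
-/

theorem integral_pow_mul_one_sub_pow (i j : ℕ) :
    ∫ x in (0 : ℝ)..1, x ^ i * (1 - x) ^ j = (i ! * j ! : ℝ) / (i + j + 1)! := by
  have h := Complex.betaIntegral_eq_Gamma_mul_div (i + 1) (j + 1)
    (by norm_cast; positivity) (by norm_cast; positivity)
  rw [show (i + 1 : ℂ) + (j + 1) = ((i + j + 1 : ℕ) : ℂ) + 1 by push_cast; ring,
    Complex.Gamma_nat_eq_factorial, Complex.Gamma_nat_eq_factorial,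
    Complex.Gamma_nat_eq_factorial, Complex.betaIntegral] at h
  simp only [add_sub_cancel_right, Complex.cpow_natCast] at h
  apply Complex.ofReal_injective
  rw [← intervalIntegral.integral_ofReal]
  push_cast
  exact h

theorem integral_choose_mul_pow_mul_one_sub_pow {n i : ℕ} (hi : i ≤ n) :
    ∫ x in (0 : ℝ)..1, (n.choose i : ℝ) * x ^ i * (1 - x) ^ (n - i) = 1 / (n + 1) := by
  simp_rw [mul_assoc]
  rw [intervalIntegral.integral_const_mul, integral_pow_mul_one_sub_pow, Nat.add_sub_cancel' hi,
    Nat.cast_choose ℝ hi, Nat.factorial_succ]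
  push_cast
  field_simp

theorem integral_sum_range_choose_mul_pow_mul_one_sub_pow {n d : ℕ} (hd : d ≤ n + 1) :
    ∫ x in (0 : ℝ)..1, ∑ i ∈ Finset.range d, (n.choose i : ℝ) * x ^ i * (1 - x) ^ (n - i) =
      d / (n + 1) := by
  rw [intervalIntegral.integral_finsetSum
      fun i _ ↦ (by fun_prop : Continuous _).intervalIntegrable _ _,
    Finset.sum_congr rfl fun i hi ↦ integral_choose_mul_pow_mul_one_sub_pow
      (Nat.lt_succ_iff.mp (Finset.mem_range.mp hi |>.trans_le hd))]
  simp [div_eq_mul_inv]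

theorem intervalIntegral_le_integral_of_le_measureReal_lt {Ω : Type*} [MeasurableSpace Ω]
    {P : Measure Ω} [IsFiniteMeasure P] {X : Ω → ℝ} {g : ℝ → ℝ} {c : ℝ} (hc : 0 ≤ c)
    (hX : AEMeasurable X P) (h0 : 0 ≤ᵐ[P] X) (hXc : X ≤ᵐ[P] fun _ ↦ c)
    (hg : IntervalIntegrable g volume 0 c) (hgX : ∀ ε ∈ Ioo 0 c, g ε ≤ P.real {ω | ε < X ω}) :
    ∫ ε in 0..c, g ε ≤ ∫ ω, X ω ∂P := by
  have hXint : Integrable X P := .of_bound hX.aestronglyMeasurable c <| by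
    filter_upwards [h0, hXc] with ω hω0 hωc
    rwa [Real.norm_of_nonneg hω0]
  rw [hXint.integral_eq_integral_Ioc_meas_le h0 hXc, ← intervalIntegral.integral_of_le hc]
  refine intervalIntegral.integral_mono_on_of_le_Ioo hc hg ?_ fun ε hε ↦
    (hgX ε hε).trans (measureReal_mono fun ω (hω : ε < X ω) ↦ hω.le)
  exact Antitone.intervalIntegrable fun a b hab ↦ measureReal_mono fun ω hω ↦ hab.trans hω

theorem expected_mismatch_ge_general
    {Ω : Type*} [MeasurableSpace Ω] (P : Measure Ω) [IsProbabilityMeasure P]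
    (t d : ℕ) (htd : d + 1 ≤ t)
    (X : Ω → ℝ) (hX : Measurable X)
    (h0 : ∀ᵐ ω ∂P, 0 ≤ X ω) (h1 : ∀ᵐ ω ∂P, X ω ≤ 1)
    (htail : ∀ ε : ℝ, 0 < ε → ε < 1 →
      (∑ i ∈ Finset.range d,
          ((t - 1).choose i : ℝ) * ε ^ i * (1 - ε) ^ (t - 1 - i)) ≤
        (P {ω | ε < X ω}).toReal) :
    (d : ℝ) / (t : ℝ) ≤ ∫ ω, X ω ∂P := by
  obtain ⟨n, rfl⟩ : ∃ n, t = n + 1 := ⟨t - 1, by omega⟩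
  simp only [Nat.add_sub_cancel] at htail
  calc (d : ℝ) / (n + 1 : ℕ)
      = ∫ ε in (0 : ℝ)..1, ∑ i ∈ Finset.range d, (n.choose i : ℝ) * ε ^ i * (1 - ε) ^ (n - i) := by
        rw [integral_sum_range_choose_mul_pow_mul_one_sub_pow (by omega), Nat.cast_succ]
    _ ≤ ∫ ω, X ω ∂P :=
        intervalIntegral_le_integral_of_le_measureReal_lt zero_le_one hX.aemeasurable h0 h1
          ((by fun_prop : Continuous _).intervalIntegrable _ _) fun ε hε ↦ htail ε hε.1 hε.2

/-- Expectation step of the regret tightness proposition: if a `[0,1]`-valued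
random variable `X` has tail `P(X > ε)` lower bounded by the binomial lower tail
`Σ_{i=0}^{d-1} C(t−1,i) ε^i (1−ε)^{t−1−i}` for every `ε ∈ (0,1)`, then
`E[X] ≥ d/t`. -/
theorem expected_mismatch_ge
    {Ω : Type*} [MeasurableSpace Ω] (P : Measure Ω) [IsProbabilityMeasure P]
    (t d : ℕ) (hd : 1 ≤ d) (htd : d + 1 ≤ t)
    (X : Ω → ℝ) (hX : Measurable X)
    (h0 : ∀ᵐ ω ∂P, 0 ≤ X ω) (h1 : ∀ᵐ ω ∂P, X ω ≤ 1)
    (htail : ∀ ε : ℝ, 0 < ε → ε < 1 →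
      (∑ i ∈ Finset.range d,
          ((t - 1).choose i : ℝ) * ε ^ i * (1 - ε) ^ (t - 1 - i)) ≤
        (P {ω | ε < X ω}).toReal) :
    (d : ℝ) / (t : ℝ) ≤ ∫ ω, X ω ∂P :=
  expected_mismatch_ge_general P t d htd X hX h0 h1 htail
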